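/- arXiv:math/0103189 — 2 statements merged into one kernel-verified Lean document; each statement's English description precedes it below -/
import Mathlib

section
/- A finite undirected graph G (multiple edges and at most one self-loop per vertex allowed) admits a sink-free orientation if and only if no connected component of G is a tree. -/
open MeasureTheory ProbabilityTheory
open scoped ENNReal

namespace SinkPopping

variable {V E : Type} [Fintype V] [Fintype E] [DecidableEq V] [DecidableEq E]

/-- The orientations of the edge `e`: pairs `p = (tail, head)` whose unordered pair of
coordinates is the pair of endpoints of `e`.  The edge is oriented as pointing from
`p.1` (its tail) to `p.2` (its head).  A self-loop has exactly one orientation, any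
other edge has exactly two. -/
abbrev EdgeOrient (ends : E → Sym2 V) (e : E) : Type :=
  {p : V × V // ends e = s(p.1, p.2)}

/-- An orientation of the multigraph on vertices `V` with edges `E` whose endpoint map is
`ends` is a choice of orientation for each edge. -/
def Orientation (ends : E → Sym2 V) : Type :=
  ∀ e, EdgeOrient ends e

/-- A vertex is a sink (for the orientation `o`) if it is the tail of no edge. -/
def IsSink (ends : E → Sym2 V) (o : Orientation ends) (v : V) : Prop :=
  ∀ e, ((o e : V × V)).1 ≠ v

/-- A vertex is a source (for the orientation `o`) if it is the head of no edge. -/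
def IsSource (ends : E → Sym2 V) (o : Orientation ends) (v : V) : Prop :=
  ∀ e, ((o e : V × V)).2 ≠ v

/-- A sink-free orientation. -/
def IsSFO (ends : E → Sym2 V) (o : Orientation ends) : Prop :=
  ∀ v, ¬ IsSink ends o v

instance (ends : E → Sym2 V) (o : Orientation ends) (v : V) : Decidable (IsSink ends o v) :=
  inferInstanceAs (Decidable (∀ e, ((o e : V × V)).1 ≠ v))

instance (ends : E → Sym2 V) (o : Orientation ends) : Decidable (IsSFO ends o) :=
  inferInstanceAs (Decidable (∀ v, ¬ IsSink ends o v))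

/-- Two vertices are adjacent (neighbors) if some edge has them as its endpoints. -/
def Adj (ends : E → Sym2 V) (a b : V) : Prop :=
  ∃ e, ends e = s(a, b)

/-- There is at most one self-loop at each vertex (multiple self-loops play no role
in sink-free orientations). -/
def OneLoopPerVertex (ends : E → Sym2 V) : Prop :=
  ∀ e e' : E, (ends e).IsDiag → ends e = ends e' → e = e'

/-- `vs, es` form a cycle of length `n ≥ 1` in the multigraph: distinct vertices
`v_0, …, v_{n-1}`, distinct edges `e_0, …, e_{n-1}`, with `e_i` joining `v_i` to `v_{i+1}`
(indices mod `n`).  A `1`-cycle is a vertex with a self-loop, a `2`-cycle is a pair of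
parallel edges. -/
def IsCycleIn (ends : E → Sym2 V) (n : ℕ) (vs : ZMod n → V) (es : ZMod n → E) : Prop :=
  0 < n ∧ Function.Injective vs ∧ Function.Injective es ∧
    ∀ i, ends (es i) = s(vs i, vs (i + 1))

/-- Reachability: the reflexive-transitive closure of adjacency.  The connected component
of `v` is the set of vertices reachable from `v`. -/
def Reachable (ends : E → Sym2 V) : V → V → Prop :=
  Relation.ReflTransGen (Adj ends)

/-- The connected component of `v` contains a cycle; for a component (which is connected
by definition) this says exactly that the component is not a tree. -/
def ComponentHasCycle (ends : E → Sym2 V) (v : V) : Prop :=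
  ∃ (n : ℕ) (vs : ZMod n → V) (es : ZMod n → E),
    IsCycleIn ends n vs es ∧ ∀ i, Reachable ends v (vs i)

/-- The class `S` of graphs in which no connected component is a tree, i.e. every
connected component contains a cycle. -/
def InS (ends : E → Sym2 V) : Prop :=
  ∀ v : V, ComponentHasCycle ends v

/-- The class `S₀` of graphs in which every vertex lies in some cycle. -/
def InS₀ (ends : E → Sym2 V) : Prop :=
  ∀ v : V, ∃ (n : ℕ) (vs : ZMod n → V) (es : ZMod n → E),
    IsCycleIn ends n vs es ∧ ∃ i, vs i = v

/-- `G` is (isomorphic to) the `n`-cycle:  vertices `v_0, …, v_{n-1}` and for each `i` an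
edge joining `v_i` to `v_{i+1}` (indices mod `n`).  The `1`-cycle is a vertex with a
self-loop. -/
def IsCycleGraph (ends : E → Sym2 V) : Prop :=
  ∃ (n : ℕ) (_ : 0 < n) (fV : V ≃ ZMod n) (fE : E ≃ ZMod n),
    ∀ e, ends e = s(fV.symm (fE e), fV.symm (fE e + 1))

/-- `G` is (isomorphic to) the `n`-lollipop: a path `v_0, …, v_{n-1}` with the `n-1` edges
`v_i v_{i+1}`, together with a self-loop at the end `v_{n-1}`. -/
def IsLollipopGraph (ends : E → Sym2 V) : Prop :=
  ∃ (n : ℕ) (hn : 0 < n) (fV : V ≃ Fin n) (fE : E ≃ Fin n),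
    ∀ e, ends e = s(fV.symm (fE e),
      fV.symm (if h : ((fE e : ℕ) + 1) < n then ⟨(fE e : ℕ) + 1, h⟩ else fE e))

/-- A stack configuration: an infinite stack of orientations of each edge;
`ω e k` is the `k`-th orientation in the stack under the edge `e`. -/
def PopSpace (ends : E → Sym2 V) : Type :=
  ∀ e, ℕ → EdgeOrient ends e

/-- The orientation showing after the vertices in the list `l` have been popped (in order):
the stack of the edge `e` has been advanced once for every entry of `l` incident to `e`. -/
def orientAfter (ends : E → Sym2 V) (ω : PopSpace ends) (l : List V) : Orientation ends :=
  fun e => ω e (l.countP (fun v => decide (v ∈ ends e)))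

/-- `l` is a legal popping sequence for `ω`: each entry is a sink in the orientation
showing after the previous entries have been popped. -/
def IsLegal (ends : E → Sym2 V) (ω : PopSpace ends) (l : List V) : Prop :=
  ∀ (i : ℕ) (h : i < l.length),
    IsSink ends (orientAfter ends ω (l.take i)) (l.get ⟨i, h⟩)

/-- A finite maximal popping sequence: a legal popping sequence that cannot be extended
(equivalently, one that results in a sink-free orientation). -/
def IsMaximal (ends : E → Sym2 V) (ω : PopSpace ends) (l : List V) : Prop :=
  IsLegal ends ω l ∧ ∀ v, ¬ IsLegal ends ω (l ++ [v])

/-- An infinite legal popping sequence (such a sequence is automatically maximal). -/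
def IsLegalInf (ends : E → Sym2 V) (ω : PopSpace ends) (s : ℕ → V) : Prop :=
  ∀ i, IsSink ends (orientAfter ends ω ((List.range i).map s)) (s i)

/-- A choice rule: whenever there is a sink, `C` selects one. -/
def IsChoiceRule (ends : E → Sym2 V) (C : Orientation ends → V) : Prop :=
  ∀ o : Orientation ends, (∃ v, IsSink ends o v) → IsSink ends o (C o)

/-- Sink popping, run with the choice rule `C` on the stacks `ω`: `runPop ends C ω k` is the
list of vertices popped in the first `k` steps (popping stops once the current orientation
is sink-free). -/
def runPop (ends : E → Sym2 V) (C : Orientation ends → V) (ω : PopSpace ends) : ℕ → List V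
  | 0 => []
  | (k + 1) =>
      let l := runPop ends C ω k
      if IsSFO ends (orientAfter ends ω l) then l
      else l ++ [C (orientAfter ends ω l)]

/-- The number of pops made by sink popping before a sink-free orientation is reached
(`⊤` if popping goes on forever). -/
noncomputable def stopTime (ends : E → Sym2 V) (C : Orientation ends → V)
    (ω : PopSpace ends) : ℕ∞ :=
  sInf ((fun m : ℕ => (m : ℕ∞)) ''
    {m | IsSFO ends (orientAfter ends ω (runPop ends C ω m))})

/-- `Q(G, v)`: the number of times the vertex `v` is popped during sink popping. -/
noncomputable def popCount (ends : E → Sym2 V) (C : Orientation ends → V)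
    (ω : PopSpace ends) (v : V) : ℕ∞ :=
  ⨆ k, ((runPop ends C ω k).count v : ℕ∞)

/-- The initial orientation (the top of all the stacks). -/
def initOrient (ends : E → Sym2 V) (ω : PopSpace ends) : Orientation ends :=
  fun e => ω e 0

instance (ends : E → Sym2 V) (e : E) : Nonempty (EdgeOrient ends e) := by
  obtain ⟨a, b, h⟩ : ∃ a b, ends e = s(a, b) :=
    Sym2.ind (fun a b => ⟨a, b, rfl⟩) (ends e)
  exact ⟨⟨(a, b), h⟩⟩

instance (ends : E → Sym2 V) (e : E) : MeasurableSpace (EdgeOrient ends e) := ⊤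

instance (ends : E → Sym2 V) : MeasurableSpace (PopSpace ends) := by
  unfold PopSpace; infer_instance

/-- The stacks `{X_{e,k} = ω e k : e ∈ E, k ≥ 0}` are independent under `P`, and each
`X_{e,k}` is uniformly distributed over the orientations of the edge `e`. -/
def StacksIID (ends : E → Sym2 V) (P : Measure (PopSpace ends)) : Prop :=
  iIndepFun (m := fun p : E × ℕ => (inferInstance : MeasurableSpace (EdgeOrient ends p.1)))
      (fun (p : E × ℕ) (ω : PopSpace ends) => ω p.1 p.2) P
    ∧ ∀ (e : E) (k : ℕ),
        P.map (fun ω : PopSpace ends => ω e k)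
          = (PMF.uniformOfFintype (EdgeOrient ends e)).toMeasure

/-- The number of sink-free orientations of the graph. -/
noncomputable def NumSFO (ends : E → Sym2 V) : ℕ :=
  Nat.card {o : Orientation ends // IsSFO ends o}


/-- `u` is a leaf: a vertex of degree 1, i.e. `u` is incident to exactly one edge,
which is not a self-loop. -/
def IsLeaf (ends : E → Sym2 V) (u : V) : Prop :=
  (∃! e, u ∈ ends e) ∧ ∀ e, u ∈ ends e → ¬ (ends e).IsDiag

end SinkPopping

/-!
Choosing for every vertex an edge leaving it turns a sink-free orientation into an injective
map `f` from vertices to incident edges, and conversely such an `f` orients `f v` away from `v`.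
Following the edges `f v` from a vertex, a finite graph forces the walk into a periodic orbit,
which is a cycle of the component. Conversely, if every component has a cycle, grow a set `C`
of vertices carrying such an injection into edges with both ends in `C`: a vertex outside `C`
either reaches `C`, and the edge by which its path enters `C` extends the injection, or its
component misses `C`, and its whole cycle can be added.
-/

namespace SinkPopping

variable {V E : Type} {ends : E → Sym2 V}

theorem exists_sfo_iff_exists_injective :
    (∃ o : Orientation ends, IsSFO ends o) ↔
      ∃ f : V → E, Function.Injective f ∧ ∀ v, v ∈ ends (f v) := by
  constructor
  · rintro ⟨o, ho⟩
    have hout : ∀ v, ∃ e, (o e : V × V).1 = v := fun v => by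
      simpa [IsSink] using ho v
    choose f hf using hout
    refine ⟨f, fun a b hab => by rw [← hf a, ← hf b, hab], fun v => ?_⟩
    rw [(o (f v)).2, hf v]
    exact Sym2.mem_mk_left _ _
  · rintro ⟨f, hf, hmem⟩
    have horient : ∀ e, ∃ p : EdgeOrient ends e, ∀ v, f v = e → (p : V × V).1 = v := by
      intro e
      by_cases he : ∃ v, f v = e
      · obtain ⟨v, rfl⟩ := he
        exact ⟨⟨(v, Sym2.Mem.other (hmem v)), (Sym2.other_spec _).symm⟩,
          fun w hw => hf hw.symm⟩
      · obtain ⟨x, y, hxy⟩ : ∃ x y, ends e = s(x, y) :=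
          Sym2.ind (fun x y => ⟨x, y, rfl⟩) (ends e)
        exact ⟨⟨(x, y), hxy⟩, fun v hv => (he ⟨v, hv⟩).elim⟩
    choose o ho using horient
    exact ⟨o, fun v hsink => hsink (f v) (ho (f v) v rfl)⟩

theorem _root_.Function.exists_iterate_mem_periodicPts {α : Type*} [Finite α] (f : α → α)
    (x : α) : ∃ m, f^[m] x ∈ Function.periodicPts f := by
  obtain ⟨m, n, hmn, heq⟩ : ∃ m n, m < n ∧ f^[m] x = f^[n] x := by
    obtain ⟨m, n, hne, heq⟩ := Finite.exists_ne_map_eq_of_infinite (f^[·] x)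
    rcases hne.lt_or_gt with h | h
    exacts [⟨m, n, h, heq⟩, ⟨n, m, h, heq.symm⟩]
  refine ⟨m, Function.mk_mem_periodicPts (n := n - m) (by omega) ?_⟩
  rw [Function.IsPeriodicPt, Function.IsFixedPt, ← Function.iterate_add_apply,
    Nat.sub_add_cancel hmn.le, heq]

theorem reachable_iterate {f : V → E} {next : V → V} (hnext : ∀ v, ends (f v) = s(v, next v))
    (v : V) (m : ℕ) : Reachable ends v (next^[m] v) := by
  induction m with
  | zero => exact .refl
  | succ m ih =>
    rw [Function.iterate_succ_apply']
    exact ih.tail ⟨f _, hnext _⟩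

theorem isCycleIn_periodicOrbit {f : V → E} {next : V → V} (hf : Function.Injective f)
    (hnext : ∀ v, ends (f v) = s(v, next v)) {y : V} (hy : y ∈ Function.periodicPts next) :
    IsCycleIn ends (Function.minimalPeriod next y) (fun k => next^[k.val] y)
      (fun k => f (next^[k.val] y)) := by
  set n := Function.minimalPeriod next y
  have hn : 0 < n := Function.minimalPeriod_pos_of_mem_periodicPts hy
  have : NeZero n := ⟨hn.ne'⟩
  have hinj : Function.Injective fun k : ZMod n => next^[k.val] y := fun a b hab =>
    ZMod.val_injective n (Function.iterate_injOn_Iio_minimalPeriod (ZMod.val_lt a)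
      (ZMod.val_lt b) hab)
  refine ⟨hn, hinj, hf.comp hinj, fun k => ?_⟩
  dsimp only
  rw [hnext, ZMod.val_add, ZMod.val_one_eq_one_mod, Nat.add_mod_mod,
    Function.iterate_mod_minimalPeriod_eq, Function.iterate_succ_apply']

theorem componentHasCycle_of_injective [Finite V] {f : V → E} (hf : Function.Injective f)
    (hmem : ∀ v, v ∈ ends (f v)) (v : V) : ComponentHasCycle ends v := by
  set next : V → V := fun w => Sym2.Mem.other (hmem w)
  have hnext : ∀ w, ends (f w) = s(w, next w) := fun w => (Sym2.other_spec _).symm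
  obtain ⟨m, hm⟩ := Function.exists_iterate_mem_periodicPts next v
  refine ⟨_, _, _, isCycleIn_periodicOrbit hf hnext hm, fun k => ?_⟩
  rw [← Function.iterate_add_apply]
  exact reachable_iterate hnext v _

/-- For `C = univ`, orienting each `g c` away from `c` gives a sink-free orientation. -/
def IsClosedEdgeChoice (ends : E → Sym2 V) (C : Set V) (g : V → E) : Prop :=
  Set.InjOn g C ∧ ∀ c ∈ C, c ∈ ends (g c) ∧ ∀ w ∈ ends (g c), w ∈ C

theorem exists_boundary_adj_of_reachable {C : Set V} {a b : V} (h : Reachable ends a b)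
    (ha : a ∉ C) (hb : b ∈ C) : ∃ u ∉ C, ∃ w ∈ C, Adj ends u w := by
  induction h with
  | refl => exact (ha hb).elim
  | @tail x b _ hxb ih =>
    by_cases hx : x ∈ C
    · exact ih hx
    · exact ⟨x, hx, b, hb, hxb⟩

namespace IsClosedEdgeChoice

variable {C : Set V} {g : V → E}

theorem notMem_ends {c v : V} (hC : IsClosedEdgeChoice ends C g) (hc : c ∈ C) (hv : v ∉ C) :
    v ∉ ends (g c) :=
  fun h => hv ((hC.2 c hc).2 v h)

theorem insert [DecidableEq V] (hC : IsClosedEdgeChoice ends C g) {v w : V} {e : E}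
    (hv : v ∉ C) (hw : w ∈ C) (he : ends e = s(v, w)) :
    IsClosedEdgeChoice ends (insert v C) (Function.update g v e) := by
  have hg : ∀ c ∈ C, Function.update g v e c = g c := fun c hc =>
    Function.update_of_ne (by rintro rfl; exact hv hc) _ _
  refine ⟨(Set.injOn_insert hv).2 ⟨fun a ha b hb hab => hC.1 ha hb ?_, ?_⟩, ?_⟩
  · rwa [← hg a ha, ← hg b hb]
  · rintro ⟨c, hc, hce⟩
    rw [hg c hc, Function.update_self] at hce
    exact hC.notMem_ends hc hv (hce ▸ he ▸ Sym2.mem_mk_left _ _)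
  · rintro c (rfl | hc)
    · rw [Function.update_self, he]
      refine ⟨Sym2.mem_mk_left _ _, fun u hu => ?_⟩
      rcases Sym2.mem_iff.1 hu with rfl | rfl
      exacts [Set.mem_insert _ _, Set.mem_insert_of_mem _ hw]
    · rw [hg c hc]
      exact ⟨(hC.2 c hc).1, fun u hu => Set.mem_insert_of_mem _ ((hC.2 c hc).2 u hu)⟩

theorem union_cycle (hC : IsClosedEdgeChoice ends C g) {n : ℕ} {vs : ZMod n → V}
    {es : ZMod n → E} (hcyc : IsCycleIn ends n vs es) (hdisj : ∀ i, vs i ∉ C) :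
    IsClosedEdgeChoice ends (C ∪ Set.range vs) (Function.extend vs es g) := by
  obtain ⟨-, hvs, hes, hends⟩ := hcyc
  have hg : ∀ c ∈ C, Function.extend vs es g c = g c := fun c hc =>
    Function.extend_apply' _ _ _ (by rintro ⟨i, rfl⟩; exact hdisj i hc)
  have hes' : ∀ i, Function.extend vs es g (vs i) = es i := hvs.extend_apply _ _
  refine ⟨?_, ?_⟩
  · rintro a (ha | ⟨i, rfl⟩) b (hb | ⟨j, rfl⟩) hab
    · exact hC.1 ha hb (by rwa [← hg a ha, ← hg b hb])
    · rw [hg a ha, hes'] at hab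
      exact (hC.notMem_ends ha (hdisj j) (hab ▸ hends j ▸ Sym2.mem_mk_left _ _)).elim
    · rw [hg b hb, hes'] at hab
      exact (hC.notMem_ends hb (hdisj i) (hab ▸ hends i ▸ Sym2.mem_mk_left _ _)).elim
    · rw [hes', hes'] at hab
      rw [hes hab]
  · rintro c (hc | ⟨i, rfl⟩)
    · rw [hg c hc]
      exact ⟨(hC.2 c hc).1, fun u hu => Or.inl ((hC.2 c hc).2 u hu)⟩
    · rw [hes', hends]
      refine ⟨Sym2.mem_mk_left _ _, fun u hu => Or.inr ?_⟩
      rcases Sym2.mem_iff.1 hu with rfl | rfl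
      exacts [⟨i, rfl⟩, ⟨i + 1, rfl⟩]

end IsClosedEdgeChoice

theorem exists_closedEdgeChoice_ssuperset (hS : ∀ v, ComponentHasCycle ends v) {C : Set V}
    {g : V → E} (hC : IsClosedEdgeChoice ends C g) (hne : C ≠ Set.univ) :
    ∃ C' g', C ⊂ C' ∧ IsClosedEdgeChoice ends C' g' := by
  classical
  obtain ⟨v, hv⟩ := (Set.ne_univ_iff_exists_notMem C).1 hne
  obtain ⟨n, vs, es, hcyc, hreach⟩ := hS v
  by_cases hmeet : ∃ i, vs i ∈ C
  · obtain ⟨i, hi⟩ := hmeet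
    obtain ⟨u, hu, w, hw, e, he⟩ := exists_boundary_adj_of_reachable (hreach i) hv hi
    exact ⟨_, _, Set.ssubset_insert hu, hC.insert hu hw he⟩
  · simp only [not_exists] at hmeet
    have hlt : C ⊂ C ∪ Set.range vs :=
      (Set.ssubset_iff_of_subset Set.subset_union_left).2 ⟨vs 0, Or.inr ⟨0, rfl⟩, hmeet 0⟩
    exact ⟨_, _, hlt, hC.union_cycle hcyc hmeet⟩

theorem exists_injective_of_forall_componentHasCycle [Finite V]
    (hS : ∀ v, ComponentHasCycle ends v) :
    ∃ f : V → E, Function.Injective f ∧ ∀ v, v ∈ ends (f v) := by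
  obtain ⟨g₀⟩ : Nonempty (V → E) := ⟨fun v => Classical.choice <| by
    obtain ⟨n, -, es, -⟩ := hS v
    exact ⟨es 0⟩⟩
  obtain ⟨C, ⟨g, hC⟩, hmax⟩ := Set.Finite.exists_maximal (Set.toFinite
    {C : Set V | ∃ g, IsClosedEdgeChoice ends C g}) ⟨∅, g₀, by simp [IsClosedEdgeChoice]⟩
  obtain rfl : C = Set.univ := by
    by_contra hne
    obtain ⟨C', g', hlt, hC'⟩ := exists_closedEdgeChoice_ssuperset hS hC hne
    exact hlt.2 (hmax ⟨g', hC'⟩ hlt.1)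
  exact ⟨g, Set.injOn_univ.1 hC.1, fun v => (hC.2 v trivial).1⟩

end SinkPopping

namespace SinkPopping

variable {V E : Type} [Fintype V] [Fintype E] [DecidableEq V] [DecidableEq E]

theorem exists_sfo_iff_no_tree_component_general
    (ends : E → Sym2 V) :
    (∃ o : Orientation ends, IsSFO ends o) ↔ ∀ v : V, ComponentHasCycle ends v := by
  rw [exists_sfo_iff_exists_injective]
  constructor
  · rintro ⟨f, hf, hmem⟩
    exact componentHasCycle_of_injective hf hmem
  · exact exists_injective_of_forall_componentHasCycle

/-- A finite undirected multigraph admits a sink-free orientation if and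
only if no connected component of it is a tree, i.e. iff every connected component
contains a cycle. -/
theorem exists_sfo_iff_no_tree_component
    (ends : E → Sym2 V) (hloop : OneLoopPerVertex ends) :
    (∃ o : Orientation ends, IsSFO ends o) ↔ ∀ v : V, ComponentHasCycle ends v :=
  exists_sfo_iff_no_tree_component_general ends

end SinkPopping
end

section
/- (Deterministic strong Markov property) Fix stacks X_{e,k} of orientations, an integer j, and vertices v_0, …, v_{j−1} forming a legal popping sequence for the stack configuration ω. Define the shifted configuration ω' by X_{e,k}(ω') = X_{e, k + f(e,j)}(ω), where f(e,j) is the number of indices i < j with v_i incident to e. Then for any k ≤ ∞, the set of sequences (v_{j}, …, v_{j+k−1}) for which v_0, …, v_{j+k−1} is a legal popping sequence for ω equals the set of legal popping sequences of length k for ω'; moreover if v_0, …, v_{j+k−1} is maximal for ω then v_j, …, v_{j+k−1} is maximal for ω', and (when k < ∞) both leave the same sink-free orientation. -/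
open MeasureTheory ProbabilityTheory
open scoped ENNReal

namespace SinkPopping

variable {V E : Type} [Fintype V] [Fintype E] [DecidableEq V] [DecidableEq E]

/-! Popping `l₀` advances the stack of each edge `e` by `f(e, |l₀|)`, so the orientation showing
after `l₀ ++ l` for `ω` is the one showing after `l` for the shifted stacks. Legality asks for a
sink in these orientations one prefix at a time, so it splits along `l₀ ++ l`; maximality and
infinite legality reduce to legality of finite prefixes. -/

theorem _root_.List.map_range_prefix {α : Type*} (f : ℕ → α) {n m : ℕ} (h : n ≤ m) :
    (List.range n).map f <+: (List.range m).map f := by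
  rw [← min_eq_left h, ← List.take_range, List.map_take]
  exact List.take_prefix _ _

theorem _root_.List.map_range_add_length_dite {α : Type*} (l : List α) (s : ℕ → α) (n : ℕ) :
    (List.range (l.length + n)).map
        (fun i => if h : i < l.length then l.get ⟨i, h⟩ else s (i - l.length)) =
      l ++ (List.range n).map s :=
  List.ext_getElem (by simp) fun i _ _ => by
    simp only [List.getElem_map, List.getElem_range, List.getElem_append, List.get_eq_getElem]

section Popping

omit [Fintype V] [Fintype E] [DecidableEq E]

variable (ends : E → Sym2 V)

/-- The stacks left once `l₀` has been popped: `X_{e,k}(ω') = X_{e, k + f(e, |l₀|)}(ω)`. -/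
def PopSpace.shift (ω : PopSpace ends) (l₀ : List V) : PopSpace ends :=
  fun e k => ω e (k + l₀.countP (fun v => decide (v ∈ ends e)))

variable {ends}

theorem orientAfter_append (ω : PopSpace ends) (l₀ l : List V) :
    orientAfter ends ω (l₀ ++ l) = orientAfter ends (PopSpace.shift ends ω l₀) l := by
  funext e
  simp only [orientAfter, PopSpace.shift, List.countP_append, Nat.add_comm]

theorem isLegal_nil (ω : PopSpace ends) : IsLegal ends ω [] :=
  fun _ h => absurd h (Nat.not_lt_zero _)

theorem isLegal_append_singleton {ω : PopSpace ends} {l : List V} {v : V} :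
    IsLegal ends ω (l ++ [v]) ↔ IsLegal ends ω l ∧ IsSink ends (orientAfter ends ω l) v := by
  constructor
  · intro h
    refine ⟨fun i hi => ?_, ?_⟩
    · have := h i (by simp; omega)
      rwa [List.take_append_of_le_length hi.le, List.get_eq_getElem,
        List.getElem_append_left hi] at this
    · simpa using h l.length (by simp)
  · rintro ⟨hl, hv⟩ i hi
    rcases Nat.lt_or_ge i l.length with hi' | hi'
    · rw [List.take_append_of_le_length hi'.le, List.get_eq_getElem, List.getElem_append_left hi']
      exact hl i hi'
    · obtain rfl : i = l.length := by simp at hi; omega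
      simpa using hv

theorem isLegal_append {ω : PopSpace ends} {l₀ l : List V} :
    IsLegal ends ω (l₀ ++ l) ↔
      IsLegal ends ω l₀ ∧ IsLegal ends (PopSpace.shift ends ω l₀) l := by
  induction l using List.reverseRecOn with
  | nil => simp [isLegal_nil]
  | append_singleton l v ih =>
    rw [← List.append_assoc, isLegal_append_singleton, isLegal_append_singleton, ih,
      orientAfter_append, and_assoc]

theorem IsLegal.of_prefix {ω : PopSpace ends} {l l' : List V} (hl' : IsLegal ends ω l')
    (h : l <+: l') : IsLegal ends ω l := by
  obtain ⟨t, rfl⟩ := h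
  exact (isLegal_append.1 hl').1

theorem isMaximal_append {ω : PopSpace ends} {l₀ l : List V} :
    IsMaximal ends ω (l₀ ++ l) ↔
      IsLegal ends ω l₀ ∧ IsMaximal ends (PopSpace.shift ends ω l₀) l := by
  simp only [IsMaximal, List.append_assoc, isLegal_append (l₀ := l₀)]
  constructor
  · rintro ⟨⟨h₀, hl⟩, hmax⟩
    exact ⟨h₀, hl, fun v hv => hmax v ⟨h₀, hv⟩⟩
  · rintro ⟨h₀, hl, hmax⟩
    exact ⟨⟨h₀, hl⟩, fun v hv => hmax v hv.2⟩

theorem isLegalInf_iff_forall_isLegal {ω : PopSpace ends} {s : ℕ → V} :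
    IsLegalInf ends ω s ↔ ∀ n, IsLegal ends ω ((List.range n).map s) := by
  have map_range_succ (n : ℕ) : (List.range (n + 1)).map s = (List.range n).map s ++ [s n] := by
    rw [List.range_succ, List.map_append, List.map_singleton]
  constructor
  · intro h n
    induction n with
    | zero => exact isLegal_nil ω
    | succ n ih => exact map_range_succ n ▸ isLegal_append_singleton.2 ⟨ih, h n⟩
  · intro h n
    exact (isLegal_append_singleton.1 (map_range_succ n ▸ h (n + 1))).2

theorem isLegalInf_prepend_iff {ω : PopSpace ends} {l₀ : List V} {s : ℕ → V} :
    IsLegalInf ends ω (fun i => if h : i < l₀.length then l₀.get ⟨i, h⟩ else s (i - l₀.length)) ↔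
      IsLegal ends ω l₀ ∧ IsLegalInf ends (PopSpace.shift ends ω l₀) s := by
  simp only [isLegalInf_iff_forall_isLegal]
  have map_range := List.map_range_add_length_dite l₀ s
  constructor
  · intro h
    exact ⟨(isLegal_append.1 (map_range 0 ▸ h _)).1,
      fun n => (isLegal_append.1 (map_range n ▸ h _)).2⟩
  · rintro ⟨h₀, h⟩ n
    refine IsLegal.of_prefix ?_ (List.map_range_prefix _ (Nat.le_add_left n l₀.length))
    exact map_range n ▸ isLegal_append.2 ⟨h₀, h n⟩

end Popping

theorem deterministic_strong_markov_general
    (ends : E → Sym2 V)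
    (ω ω' : PopSpace ends) (l₀ : List V) (h₀ : IsLegal ends ω l₀)
    (hω' : ∀ e k, ω' e k = ω e (k + l₀.countP (fun v => decide (v ∈ ends e)))) :
    (∀ l : List V, IsLegal ends ω (l₀ ++ l) ↔ IsLegal ends ω' l) ∧
    (∀ l : List V, IsMaximal ends ω (l₀ ++ l) →
      IsMaximal ends ω' l ∧ orientAfter ends ω (l₀ ++ l) = orientAfter ends ω' l) ∧
    (∀ s : ℕ → V,
      IsLegalInf ends ω
          (fun i => if h : i < l₀.length then l₀.get ⟨i, h⟩ else s (i - l₀.length))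
        ↔ IsLegalInf ends ω' s) := by
  obtain rfl : ω' = PopSpace.shift ends ω l₀ := funext fun e => funext (hω' e)
  refine ⟨fun l => ?_, fun l hmax => ?_, fun s => ?_⟩
  · rw [isLegal_append, and_iff_right h₀]
  · exact ⟨(isMaximal_append.1 hmax).2, orientAfter_append ω l₀ l⟩
  · rw [isLegalInf_prepend_iff, and_iff_right h₀]

/-- Deterministic strong Markov property.  Let `l₀ = v_0, …, v_{j-1}`
be a legal popping sequence for the stack configuration `ω`, and let `ω'` be the shifted
configuration `X_{e,k}(ω') = X_{e, k + f(e,j)}(ω)`.  Then a sequence `l` extends `l₀` to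
a legal popping sequence of `ω` iff `l` is a legal popping sequence of `ω'` (and the same
for infinite sequences `s`); moreover if `l₀ ++ l` is maximal for `ω` then `l` is maximal
for `ω'` and both leave the same sink-free orientation. -/
theorem deterministic_strong_markov
    (ends : E → Sym2 V) (hloop : OneLoopPerVertex ends)
    (ω ω' : PopSpace ends) (l₀ : List V) (h₀ : IsLegal ends ω l₀)
    (hω' : ∀ e k, ω' e k = ω e (k + l₀.countP (fun v => decide (v ∈ ends e)))) :
    (∀ l : List V, IsLegal ends ω (l₀ ++ l) ↔ IsLegal ends ω' l) ∧
    (∀ l : List V, IsMaximal ends ω (l₀ ++ l) →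
      IsMaximal ends ω' l ∧ orientAfter ends ω (l₀ ++ l) = orientAfter ends ω' l) ∧
    (∀ s : ℕ → V,
      IsLegalInf ends ω
          (fun i => if h : i < l₀.length then l₀.get ⟨i, h⟩ else s (i - l₀.length))
        ↔ IsLegalInf ends ω' s) :=
  deterministic_strong_markov_general ends ω ω' l₀ h₀ hω'

end SinkPopping
end
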